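/- arXiv:1606.09140 — 5 statements merged into one kernel-verified Lean document; each statement's English description precedes it below -/
import Mathlib

section
/- Let φ be a map from a non-associative relation algebra A to the power set of D×D that respects the boolean operators, maps 1' to the identity relation on D, and maps x̆ to the converse relation of φ(x). Then φ is a qualitative representation (i.e., for all a,b,c: φ(c) ⊇ φ(a)∘φ(b) iff c ≥ a;b) if and only if for all a,b,c ∈ A: a;b·c ≠ 0 iff there exist x,y,z ∈ D with (x,y)∈φ(a), (y,z)∈φ(b), (x,z)∈φ(c). -/
/-- A non-associative relation algebra: a boolean algebra with normal additive
involuted-monoid operators satisfying the Peircean law. -/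
class NAAlg (α : Type*) extends BooleanAlgebra α where
  comp : α → α → α
  conv : α → α
  ident : α
  comp_ident : ∀ x : α, comp x ident = x
  ident_comp : ∀ x : α, comp ident x = x
  conv_conv : ∀ x : α, conv (conv x) = x
  conv_comp : ∀ x y : α, conv (comp x y) = comp (conv y) (conv x)
  conv_bot : conv ⊥ = ⊥
  comp_bot : ∀ x : α, comp x ⊥ = ⊥
  conv_sup : ∀ x y : α, conv (x ⊔ y) = conv x ⊔ conv y
  comp_sup : ∀ x y z : α, comp x (y ⊔ z) = comp x y ⊔ comp x z
  peirce : ∀ x y z : α, comp x y ⊓ conv z = ⊥ ↔ comp y z ⊓ conv x = ⊥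

/-- Composition of binary relations. -/
def rcomp {D : Type*} (r s : Set (D × D)) : Set (D × D) :=
  {p | ∃ z, (p.1, z) ∈ r ∧ (z, p.2) ∈ s}

theorem rcomp_subset_iff_not_exists_triangle {D : Type*} (r s t : Set (D × D)) :
    rcomp r s ⊆ t ↔ ¬∃ x y z : D, (x, y) ∈ r ∧ (y, z) ∈ s ∧ (x, z) ∈ tᶜ :=
  ⟨fun h ⟨_, y, _, hxy, hyz, hxz⟩ => hxz (h ⟨y, hxy, hyz⟩),
    fun h ⟨x, z⟩ ⟨y, hxy, hyz⟩ => by_contra fun hxz => h ⟨x, y, z, hxy, hyz, hxz⟩⟩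

theorem le_iff_inf_compl_eq_bot {β : Type*} [BooleanAlgebra β] {x c : β} :
    x ≤ c ↔ x ⊓ cᶜ = ⊥ := by
  rw [← sdiff_eq, sdiff_eq_bot_iff]

theorem stmt2_general {α D : Type*} [NAAlg α] (φ : α → Set (D × D))
    (h_compl : ∀ a : α, φ aᶜ = Set.univ \ φ a) :
    (∀ a b c : α, rcomp (φ a) (φ b) ⊆ φ c ↔ NAAlg.comp a b ≤ c) ↔
    (∀ a b c : α, NAAlg.comp a b ⊓ c ≠ ⊥ ↔
      ∃ x y z : D, (x, y) ∈ φ a ∧ (y, z) ∈ φ b ∧ (x, z) ∈ φ c) := by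
  -- Each side of the first equivalence at `c` negates a side of the second at `cᶜ`.
  have h_iff : ∀ a b c, (rcomp (φ a) (φ b) ⊆ φ c ↔ NAAlg.comp a b ≤ c) ↔
      (NAAlg.comp a b ⊓ cᶜ ≠ ⊥ ↔
        ∃ x y z : D, (x, y) ∈ φ a ∧ (y, z) ∈ φ b ∧ (x, z) ∈ φ cᶜ) := by
    intro a b c
    rw [h_compl, ← Set.compl_eq_univ_sdiff, rcomp_subset_iff_not_exists_triangle,
      le_iff_inf_compl_eq_bot]
    exact not_iff_comm
  refine forall₂_congr fun a b => ?_
  conv_rhs => rw [compl_surjective.forall]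
  exact forall_congr' (h_iff a b)

theorem stmt2 {α D : Type*} [NAAlg α] (φ : α → Set (D × D))
    (h_top : φ ⊤ = Set.univ)
    (h_compl : ∀ a : α, φ aᶜ = Set.univ \ φ a)
    (h_sup : ∀ a b : α, φ (a ⊔ b) = φ a ∪ φ b)
    (h_ident : φ NAAlg.ident = {p : D × D | p.1 = p.2})
    (h_conv : ∀ a : α, φ (NAAlg.conv a) = {p : D × D | (p.2, p.1) ∈ φ a}) :
    (∀ a b c : α, rcomp (φ a) (φ b) ⊆ φ c ↔ NAAlg.comp a b ≤ c) ↔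
    (∀ a b c : α, NAAlg.comp a b ⊓ c ≠ ⊥ ↔
      ∃ x y z : D, (x, y) ∈ φ a ∧ (y, z) ∈ φ b ∧ (x, z) ∈ φ c) :=
  stmt2_general φ h_compl
end

section
/- An integral non-associative relation algebra (one in which x;y=0 implies x=0 or y=0) is semi-associative: x;(1;1) = (x;1);1 for all x. -/
/-!
In an integral algebra `x ; ⊤ = ⊤` for every `x ≠ ⊥`: with `z` the converse of the complement
of `x ; ⊤` we have `x ; ⊤ ⊓ z˘ = ⊥`, which the Peircean law rotates twice into `z ; x = ⊥`,
so `z = ⊥`. Hence both sides of the semi-associative law are `⊤` when `x ≠ ⊥`, and `⊥` when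
`x = ⊥`.
-/

namespace NAAlg

def IsIntegral (α : Type*) [NAAlg α] : Prop :=
  ∀ x y : α, comp x y = ⊥ → x = ⊥ ∨ y = ⊥

variable {α : Type*} [NAAlg α]

lemma conv_mono {x y : α} (h : x ≤ y) : conv x ≤ conv y := by
  rw [← sup_eq_right, ← conv_sup, sup_eq_right.mpr h]

@[simp] lemma conv_top : (conv ⊤ : α) = ⊤ :=
  top_unique <| by simpa only [conv_conv] using conv_mono (le_top : conv (⊤ : α) ≤ ⊤)

@[simp] lemma conv_eq_bot_iff {x : α} : conv x = ⊥ ↔ x = ⊥ := by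
  constructor
  · intro h
    rw [← conv_conv x, h, conv_bot]
  · rintro rfl
    exact conv_bot

@[simp] lemma bot_comp (y : α) : comp ⊥ y = ⊥ := by
  rw [← conv_eq_bot_iff, conv_comp, conv_bot, comp_bot]

lemma peirce_rotate {x y z : α} (h : comp x y ⊓ conv z = ⊥) : comp z x ⊓ conv y = ⊥ :=
  (peirce y z x).mp ((peirce x y z).mp h)

lemma comp_top_eq_top (hα : IsIntegral α) {x : α} (hx : x ≠ ⊥) : comp x ⊤ = ⊤ := by
  set z : α := conv (comp x ⊤)ᶜ
  have hzx : comp z x = ⊥ := by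
    have h : comp x ⊤ ⊓ conv z = ⊥ := by
      rw [conv_conv]
      exact inf_compl_eq_bot
    simpa using peirce_rotate h
  have hz : z = ⊥ := (hα z x hzx).resolve_right hx
  simpa [z] using hz

end NAAlg

theorem stmt5 {α : Type*} [NAAlg α]
    (hint : ∀ x y : α, NAAlg.comp x y = ⊥ → x = ⊥ ∨ y = ⊥) :
    ∀ x : α, NAAlg.comp x (NAAlg.comp ⊤ ⊤) = NAAlg.comp (NAAlg.comp x ⊤) ⊤ := by
  intro x
  rcases eq_or_ne x ⊥ with rfl | hx
  · simp only [NAAlg.bot_comp]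
  · have htop : (⊤ : α) ≠ ⊥ := ne_bot_of_le_ne_bot hx le_top
    rw [NAAlg.comp_top_eq_top hint htop, NAAlg.comp_top_eq_top hint hx,
      NAAlg.comp_top_eq_top hint htop]
end

section
/- Let A be a non-associative relation algebra with a qualitative representation φ on base D satisfying condition (*): for all a,b,c,d, (φ(a)∘φ(b)) ∩ (φ(c)∘φ(d)) = ∅ iff (a;b)·(c;d) = 0. Then A is associative: (a;b);c = a;(b;c) for all a,b,c. -/
/-- A qualitative representation of a non-associative relation algebra. -/
structure IsQualRep {α D : Type*} [NAAlg α] (φ : α → Set (D × D)) : Prop where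
  map_bot : φ ⊥ = ∅
  map_top : φ ⊤ = Set.univ
  map_sup : ∀ a b : α, φ (a ⊔ b) = φ a ∪ φ b
  map_compl : ∀ a : α, φ aᶜ = Set.univ \ φ a
  map_ident : φ NAAlg.ident = {p : D × D | p.1 = p.2}
  map_conv : ∀ a : α, φ (NAAlg.conv a) = {p : D × D | (p.2, p.1) ∈ φ a}
  qual : ∀ a b c : α, rcomp (φ a) (φ b) ⊆ φ c ↔ NAAlg.comp a b ≤ c

/-!
By the Peircean law, `((a;b);c)·d = 0` and `(a;(b;c))·d = 0` are both disjointness statements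
between two composites. Condition (*) transfers them to the representation, where each says
that there is no cycle `x →a y →b z →c w` with `(x, w) ∈ φ d`. So the two composites are
disjoint from the same elements, hence equal.
-/

theorem eq_of_forall_inf_eq_bot_iff {β : Type*} [BooleanAlgebra β] {x y : β}
    (h : ∀ d, x ⊓ d = ⊥ ↔ y ⊓ d = ⊥) : x = y :=
  le_antisymm
    (disjoint_compl_right_iff.mp <| disjoint_iff.mpr <| (h _).mpr (inf_compl_self _))
    (disjoint_compl_right_iff.mp <| disjoint_iff.mpr <| (h _).mp (inf_compl_self _))

theorem rcomp_inter_rcomp_eq_empty_iff {D : Type*} (r s t u : Set (D × D)) :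
    rcomp r s ∩ rcomp t u = ∅ ↔
      ∀ x y z w, (x, y) ∈ r → (y, z) ∈ s → (x, w) ∈ t → (w, z) ∈ u → False := by
  simp only [Set.eq_empty_iff_forall_notMem, Set.mem_inter_iff, rcomp, Set.mem_ofPred_eq]
  constructor
  · intro H x y z w hr hs ht hu
    exact H (x, z) ⟨⟨y, hr, hs⟩, w, ht, hu⟩
  · rintro H ⟨x, z⟩ ⟨⟨y, hr, hs⟩, w, ht, hu⟩
    exact H x y z w hr hs ht hu

namespace NAAlg

variable {α : Type*} [NAAlg α]

theorem comp_comp_inf_eq_bot_iff (a b c d : α) :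
    comp (comp a b) c ⊓ d = ⊥ ↔ comp c (conv d) ⊓ comp (conv b) (conv a) = ⊥ := by
  simpa only [conv_conv, conv_comp] using peirce (comp a b) c (conv d)

theorem comp_comp_inf_eq_bot_iff' (a b c d : α) :
    comp a (comp b c) ⊓ d = ⊥ ↔ comp (conv d) a ⊓ comp (conv c) (conv b) = ⊥ := by
  have h := peirce (comp b c) (conv d) a
  rw [conv_comp] at h
  simpa only [conv_conv] using (peirce a (comp b c) (conv d)).trans h

end NAAlg

theorem stmt7 {α D : Type*} [NAAlg α] (φ : α → Set (D × D)) (h : IsQualRep φ)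
    (hstar : ∀ a b c d : α,
      rcomp (φ a) (φ b) ∩ rcomp (φ c) (φ d) = ∅ ↔ NAAlg.comp a b ⊓ NAAlg.comp c d = ⊥) :
    ∀ a b c : α, NAAlg.comp (NAAlg.comp a b) c = NAAlg.comp a (NAAlg.comp b c) := by
  intro a b c
  refine eq_of_forall_inf_eq_bot_iff fun d => ?_
  rw [NAAlg.comp_comp_inf_eq_bot_iff, NAAlg.comp_comp_inf_eq_bot_iff', ← hstar, ← hstar,
    rcomp_inter_rcomp_eq_empty_iff, rcomp_inter_rcomp_eq_empty_iff]
  simp only [h.map_conv, Set.mem_ofPred_eq]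
  exact ⟨fun H x y z w hd ha hc hb => H w x y z hc hd hb ha,
    fun H x y z w hc hd hb ha => H y z w x hd ha hc hb⟩
end

section
/- For any qualitative representation φ of a non-associative relation algebra A on base D, and any nonzero a ∈ A, the equation (1;a);1 = 1;(a;1) holds when evaluated via φ: both sides are represented as all of D×D if a ≠ 0 and as ∅ if a = 0. Consequently the equation (1;x);1 = 1;(x;1) is valid in every qualitatively representable non-associative relation algebra. -/
/-!
A nonzero `a` is represented by a nonempty relation; an edge `(x, y)` of it, preceded and followed
by arbitrary edges of `φ ⊤ = D × D`, connects any two points, so `φ` sends both `(1;a);1` and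
`1;(a;1)` to `D × D`. Taking `a = 1'` in the qualitativeness condition shows that `φ` is an order
embedding, hence injective, so the two terms are equal in the algebra as well.
-/

theorem NAAlg.bot_comp_s8 {α : Type*} [NAAlg α] (x : α) : NAAlg.comp ⊥ x = ⊥ := by
  simpa only [NAAlg.conv_comp, NAAlg.conv_conv, NAAlg.conv_bot] using
    congrArg NAAlg.conv (NAAlg.comp_bot (NAAlg.conv x))

theorem rcomp_diag_left {D : Type*} (s : Set (D × D)) : rcomp {p : D × D | p.1 = p.2} s = s := by
  ext ⟨x, y⟩
  exact ⟨fun ⟨_, hxz, hzy⟩ => (show x = _ from hxz) ▸ hzy, fun hxy => ⟨x, rfl, hxy⟩⟩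

namespace IsQualRep

variable {α D : Type*} [NAAlg α] {φ : α → Set (D × D)}

theorem mem_map_top (h : IsQualRep φ) (p : D × D) : p ∈ φ ⊤ :=
  h.map_top ▸ Set.mem_univ p

theorem rcomp_subset_map_comp (h : IsQualRep φ) (a b : α) :
    rcomp (φ a) (φ b) ⊆ φ (NAAlg.comp a b) :=
  (h.qual a b _).mpr le_rfl

theorem map_subset_map_iff (h : IsQualRep φ) {b c : α} : φ b ⊆ φ c ↔ b ≤ c := by
  simpa only [h.map_ident, rcomp_diag_left, NAAlg.ident_comp] using h.qual NAAlg.ident b c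

theorem injective (h : IsQualRep φ) : Function.Injective φ := fun _ _ hbc =>
  le_antisymm (h.map_subset_map_iff.mp hbc.le) (h.map_subset_map_iff.mp hbc.ge)

theorem map_nonempty (h : IsQualRep φ) {a : α} (ha : a ≠ ⊥) : (φ a).Nonempty := by
  rw [Set.nonempty_iff_ne_empty, ← h.map_bot]
  exact h.injective.ne ha

theorem map_top_comp_comp_top_eq_univ (h : IsQualRep φ) {a : α} (ha : a ≠ ⊥) :
    φ (NAAlg.comp (NAAlg.comp ⊤ a) ⊤) = Set.univ := by
  obtain ⟨⟨x, y⟩, hxy⟩ := h.map_nonempty ha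
  exact Set.eq_univ_of_forall fun ⟨u, v⟩ => h.rcomp_subset_map_comp _ _
    ⟨y, h.rcomp_subset_map_comp _ _ ⟨x, h.mem_map_top (u, x), hxy⟩, h.mem_map_top (y, v)⟩

theorem map_top_comp_comp_top_eq_univ' (h : IsQualRep φ) {a : α} (ha : a ≠ ⊥) :
    φ (NAAlg.comp ⊤ (NAAlg.comp a ⊤)) = Set.univ := by
  obtain ⟨⟨x, y⟩, hxy⟩ := h.map_nonempty ha
  exact Set.eq_univ_of_forall fun ⟨u, v⟩ => h.rcomp_subset_map_comp _ _
    ⟨x, h.mem_map_top (u, x), h.rcomp_subset_map_comp _ _ ⟨y, hxy, h.mem_map_top (y, v)⟩⟩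

end IsQualRep

theorem stmt8 {α D : Type*} [NAAlg α] (φ : α → Set (D × D)) (h : IsQualRep φ) (a : α) :
    (a ≠ ⊥ → φ (NAAlg.comp (NAAlg.comp ⊤ a) ⊤) = Set.univ ∧
              φ (NAAlg.comp ⊤ (NAAlg.comp a ⊤)) = Set.univ) ∧
    (a = ⊥ → φ (NAAlg.comp (NAAlg.comp ⊤ a) ⊤) = ∅ ∧
             φ (NAAlg.comp ⊤ (NAAlg.comp a ⊤)) = ∅) ∧
    NAAlg.comp (NAAlg.comp ⊤ a) ⊤ = NAAlg.comp ⊤ (NAAlg.comp a ⊤) := by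
  have hne (ha : a ≠ ⊥) :=
    And.intro (h.map_top_comp_comp_top_eq_univ ha) (h.map_top_comp_comp_top_eq_univ' ha)
  have hbot : a = ⊥ → φ (NAAlg.comp (NAAlg.comp ⊤ a) ⊤) = ∅ ∧
      φ (NAAlg.comp ⊤ (NAAlg.comp a ⊤)) = ∅ := by
    rintro rfl
    simp only [NAAlg.comp_bot, NAAlg.bot_comp_s8, h.map_bot, and_self]
  refine ⟨hne, hbot, h.injective ?_⟩
  by_cases ha : a = ⊥
  · rw [(hbot ha).1, (hbot ha).2]
  · rw [(hne ha).1, (hne ha).2]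
end

section
/- Let A be a finite non-associative relation algebra. A has a qualitative representation if and only if there exists a consistent atomic network (N,λ) over A such that for every consistent triple of atoms (a,b,c) (meaning a;b ≥ c) there are nodes x,y,z ∈ N with λ(x,y)=a, λ(y,z)=b, λ(x,z)=c. -/
universe u

lemma IsAtom.le_iff_inf_ne_bot {α : Type*} [Lattice α] [OrderBot α] {a b : α} (ha : IsAtom a) :
    a ≤ b ↔ b ⊓ a ≠ ⊥ := by
  rw [← ha.not_disjoint_iff_le, disjoint_comm, disjoint_iff]

lemma IsAtom.le_sup_iff {α : Type*} [DistribLattice α] [OrderBot α] {a b c : α}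
    (ha : IsAtom a) : a ≤ b ⊔ c ↔ a ≤ b ∨ a ≤ c := by
  rw [← not_iff_not, not_or, ha.not_le_iff_disjoint, ha.not_le_iff_disjoint,
    ha.not_le_iff_disjoint, disjoint_sup_right]

lemma IsAtom.le_compl_iff {α : Type*} [BooleanAlgebra α] {a b : α} (ha : IsAtom a) :
    a ≤ bᶜ ↔ ¬ a ≤ b := by
  rw [ha.not_le_iff_disjoint, le_compl_iff_disjoint_right]

namespace NAAlg

variable {α : Type*} [NAAlg α] {a b c t x x' y y' z : α}

lemma conv_involutive : Function.Involutive (conv : α → α) := conv_conv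

lemma conv_le_conv_iff : conv x ≤ conv y ↔ x ≤ y := by
  rw [← sup_eq_right, ← conv_sup, conv_involutive.injective.eq_iff, sup_eq_right]

def convIso : α ≃o α :=
  { conv_involutive.toPerm _ with map_rel_iff' := conv_le_conv_iff }

lemma isAtom_conv_iff : IsAtom (conv a) ↔ IsAtom a := convIso.isAtom_iff a

lemma conv_ident : conv (ident : α) = ident := by
  simpa only [comp_ident, conv_conv, ident_comp] using (conv_comp (conv ident) (ident : α)).symm

lemma comp_sup_left (x y z : α) : comp (x ⊔ y) z = comp x z ⊔ comp y z := by
  apply conv_involutive.injective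
  rw [conv_sup, conv_comp, conv_comp, conv_comp, conv_sup, comp_sup]

lemma comp_mono_right (h : y ≤ z) : comp x y ≤ comp x z := by
  rw [← sup_eq_right.2 h, comp_sup]
  exact le_sup_left

lemma comp_mono_left (h : x ≤ y) : comp x z ≤ comp y z := by
  rw [← sup_eq_right.2 h, comp_sup_left]
  exact le_sup_left

lemma comp_mono (hx : x ≤ x') (hy : y ≤ y') : comp x y ≤ comp x' y' :=
  (comp_mono_left hx).trans (comp_mono_right hy)

lemma comp_inf_ne_bot_iff : comp x y ⊓ z ≠ ⊥ ↔ comp y (conv z) ⊓ conv x ≠ ⊥ := by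
  simpa only [conv_conv] using (peirce x y (conv z)).not

end NAAlg

namespace NAAlg

section Atomic

variable {α : Type*} [NAAlg α] [IsAtomic α] {a b c t : α}

-- The Peircean law turns `a` into `conv a` on the right; an atom `t` found there gives `conv t`.
lemma exists_atom_le_left_of_comp_inf_ne_bot (h : comp a b ⊓ c ≠ ⊥) :
    ∃ a', IsAtom a' ∧ a' ≤ a ∧ comp a' b ⊓ c ≠ ⊥ := by
  rw [comp_inf_ne_bot_iff] at h
  obtain ⟨t, ht, hle⟩ := (eq_bot_or_exists_atom_le _).resolve_left h
  refine ⟨conv t, isAtom_conv_iff.2 ht, ?_, ?_⟩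
  · rw [← conv_le_conv_iff, conv_conv]
    exact hle.trans inf_le_right
  · rw [comp_inf_ne_bot_iff, conv_conv]
    exact ht.le_iff_inf_ne_bot.1 (hle.trans inf_le_left)

lemma exists_atom_le_right_of_comp_inf_ne_bot (h : comp a b ⊓ c ≠ ⊥) :
    ∃ b', IsAtom b' ∧ b' ≤ b ∧ comp a b' ⊓ c ≠ ⊥ := by
  rw [comp_inf_ne_bot_iff] at h
  obtain ⟨b', hb', hle, h'⟩ := exists_atom_le_left_of_comp_inf_ne_bot h
  exact ⟨b', hb', hle, comp_inf_ne_bot_iff.2 h'⟩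

lemma exists_atoms_le_of_atom_le_comp (ht : IsAtom t) (hle : t ≤ comp a b) :
    ∃ a' b', IsAtom a' ∧ IsAtom b' ∧ a' ≤ a ∧ b' ≤ b ∧ t ≤ comp a' b' := by
  obtain ⟨a', ha', haa, h⟩ :=
    exists_atom_le_left_of_comp_inf_ne_bot (ht.le_iff_inf_ne_bot.1 hle)
  obtain ⟨b', hb', hbb, h⟩ := exists_atom_le_right_of_comp_inf_ne_bot h
  exact ⟨a', b', ha', hb', haa, hbb, ht.le_iff_inf_ne_bot.2 h⟩

end Atomic

section Network

variable {α N : Type*} [NAAlg α]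

structure IsConsistentAtomicNetwork (lam : N → N → α) : Prop where
  le_ident : ∀ x, lam x x ≤ ident
  comp_inf_ne_bot : ∀ x y z, comp (lam x y) (lam y z) ⊓ lam x z ≠ ⊥
  inf_conv_ne_bot : ∀ x y, lam x y ⊓ conv (lam y x) ≠ ⊥
  isAtom : ∀ x y, IsAtom (lam x y)

def RealizesConsistentTriples (lam : N → N → α) : Prop :=
  ∀ a b c : α, IsAtom a → IsAtom b → IsAtom c → c ≤ comp a b →
    ∃ x y z : N, lam x y = a ∧ lam y z = b ∧ lam x z = c

lemma RealizesConsistentTriples.exists_eq [IsAtomic α] {lam : N → N → α}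
    (hsat : RealizesConsistentTriples lam) {a : α} (ha : IsAtom a) : ∃ x y, lam x y = a := by
  have hle : a ≤ comp a ident := (comp_ident a).ge
  obtain ⟨a', e, ha', he, -, -, hle'⟩ := exists_atoms_le_of_atom_le_comp ha hle
  obtain ⟨x, -, z, -, -, hxz⟩ := hsat a' e a ha' he ha hle'
  exact ⟨x, z, hxz⟩

namespace IsConsistentAtomicNetwork

variable {lam : N → N → α} (h : IsConsistentAtomicNetwork lam) {x x' y y' z : N}

section
include h

lemma le_comp (x y z : N) : lam x z ≤ comp (lam x y) (lam y z) :=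
  (h.isAtom x z).le_iff_inf_ne_bot.2 (h.comp_inf_ne_bot x y z)

lemma eq_conv (x y : N) : lam x y = conv (lam y x) := by
  have hle : conv (lam y x) ≤ lam x y :=
    (isAtom_conv_iff.2 (h.isAtom y x)).le_iff_inf_ne_bot.2 (h.inf_conv_ne_bot x y)
  exact ((h.isAtom x y).le_iff_eq (isAtom_conv_iff.2 (h.isAtom y x)).ne_bot).1 hle |>.symm

lemma le_ident_symm (hxy : lam x y ≤ ident) : lam y x ≤ ident := by
  rw [h.eq_conv y x, ← conv_ident, conv_le_conv_iff]
  exact hxy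

lemma le_ident_trans (hxy : lam x y ≤ ident) (hyz : lam y z ≤ ident) : lam x z ≤ ident :=
  (h.le_comp x y z).trans ((comp_mono hxy hyz).trans_eq (comp_ident _))

lemma eq_of_le_ident_left (hx : lam x x' ≤ ident) (y : N) : lam x y = lam x' y := by
  have hle : lam x y ≤ lam x' y :=
    (h.le_comp x x' y).trans ((comp_mono_left hx).trans_eq (ident_comp _))
  exact ((h.isAtom x' y).le_iff_eq (h.isAtom x y).ne_bot).1 hle

lemma eq_of_le_ident_right (hy : lam y y' ≤ ident) (x : N) : lam x y' = lam x y := by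
  have hle : lam x y' ≤ lam x y :=
    (h.le_comp x y y').trans ((comp_mono_right hy).trans_eq (comp_ident _))
  exact ((h.isAtom x y).le_iff_eq (h.isAtom x y').ne_bot).1 hle

end

def setoid : Setoid N where
  r x y := lam x y ≤ ident
  iseqv := ⟨h.le_ident, h.le_ident_symm, h.le_ident_trans⟩

def quotient : Quotient h.setoid → Quotient h.setoid → α :=
  Quotient.lift₂ lam fun _ y x' _ hx hy =>
    (h.eq_of_le_ident_left hx y).trans (h.eq_of_le_ident_right hy x').symm

lemma isConsistentAtomicNetwork_quotient : IsConsistentAtomicNetwork h.quotient where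
  le_ident := Quotient.ind h.le_ident
  comp_inf_ne_bot p q r := Quotient.inductionOn₃ p q r h.comp_inf_ne_bot
  inf_conv_ne_bot p q := Quotient.inductionOn₂ p q h.inf_conv_ne_bot
  isAtom p q := Quotient.inductionOn₂ p q h.isAtom

lemma eq_of_quotient_le_ident (p q : Quotient h.setoid) : h.quotient p q ≤ ident → p = q :=
  Quotient.inductionOn₂ p q fun _ _ hxy => Quotient.sound hxy

lemma realizesConsistentTriples_quotient (hsat : RealizesConsistentTriples lam) :
    RealizesConsistentTriples h.quotient := by
  intro a b c ha hb hc hle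
  obtain ⟨x, y, z, hxy, hyz, hxz⟩ := hsat a b c ha hb hc hle
  exact ⟨⟦x⟧, ⟦y⟧, ⟦z⟧, hxy, hyz, hxz⟩

end IsConsistentAtomicNetwork

def networkRel (lam : N → N → α) (a : α) : Set (N × N) := {p | lam p.1 p.2 ≤ a}

variable [IsAtomic α] {lam : N → N → α}

lemma injective_networkRel (hsat : RealizesConsistentTriples lam) :
    Function.Injective (networkRel lam) := by
  intro a b hab
  refine BooleanAlgebra.eq_iff_atom_le_iff.2 fun t ht => ?_
  obtain ⟨x, y, rfl⟩ := hsat.exists_eq ht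
  exact Set.ext_iff.1 hab (x, y)

lemma le_of_networkRel_comp_subset (hsat : RealizesConsistentTriples lam) {a b c : α}
    (hsub : rcomp (networkRel lam a) (networkRel lam b) ⊆ networkRel lam c) :
    comp a b ≤ c := by
  refine BooleanAlgebra.le_iff_atom_le_imp.2 fun t ht hle => ?_
  obtain ⟨a', b', ha', hb', haa, hbb, hle'⟩ := exists_atoms_le_of_atom_le_comp ht hle
  obtain ⟨x, y, z, hxy, hyz, hxz⟩ := hsat a' b' t ha' hb' ht hle'
  have hmem : (x, z) ∈ networkRel lam c :=
    hsub ⟨y, show lam x y ≤ a from hxy ▸ haa, show lam y z ≤ b from hyz ▸ hbb⟩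
  exact hxz ▸ hmem

lemma isQualRep_networkRel (h : IsConsistentAtomicNetwork lam)
    (hred : ∀ x y, lam x y ≤ ident → x = y) (hsat : RealizesConsistentTriples lam) :
    IsQualRep (networkRel lam) where
  map_bot := Set.eq_empty_of_forall_notMem fun p hp => (h.isAtom p.1 p.2).ne_bot (le_bot_iff.1 hp)
  map_top := Set.ext fun _ => iff_of_true le_top trivial
  map_sup a b := Set.ext fun p => (h.isAtom p.1 p.2).le_sup_iff
  map_compl a := Set.ext fun p => by
    simpa [networkRel] using (h.isAtom p.1 p.2).le_compl_iff
  map_ident := Set.ext fun ⟨x, y⟩ =>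
    ⟨hred x y, fun (hxy : x = y) => show lam x y ≤ ident from hxy ▸ h.le_ident x⟩
  map_conv a := Set.ext fun p => by
    show lam p.1 p.2 ≤ conv a ↔ lam p.2 p.1 ≤ a
    rw [h.eq_conv, conv_le_conv_iff]
  qual a b c := by
    refine ⟨le_of_networkRel_comp_subset hsat, fun hle ⟨x, z⟩ ⟨y, hxy, hyz⟩ => ?_⟩
    exact (h.le_comp x y z).trans ((comp_mono hxy hyz).trans hle)

end Network

end NAAlg

namespace IsQualRep

open NAAlg

variable {α : Type u} {D : Type*} [NAAlg α]

open Classical in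
noncomputable def atomOf [Fintype α] (φ : α → Set (D × D)) (p : D × D) : α :=
  (Finset.univ.filter (p ∈ φ ·)).inf id

variable {φ : α → Set (D × D)} (hφ : IsQualRep φ)
include hφ

lemma map_inf (a b : α) : φ (a ⊓ b) = φ a ∩ φ b := by
  rw [← compl_compl (a ⊓ b), compl_inf, hφ.map_compl, hφ.map_sup, hφ.map_compl,
    hφ.map_compl]
  ext p
  simp only [Set.mem_sdiff, Set.mem_univ, Set.mem_union, Set.mem_inter_iff, true_and]
  tauto

lemma monotone : Monotone φ := fun a b hab => by
  rw [← sup_eq_right.2 hab, hφ.map_sup]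
  exact Set.subset_union_left

lemma exists_triangle {a b c : α} (hc : IsAtom c) (hle : c ≤ comp a b) :
    ∃ x y z : D, (x, y) ∈ φ a ∧ (y, z) ∈ φ b ∧ (x, z) ∈ φ c := by
  have hnot : ¬ rcomp (φ a) (φ b) ⊆ φ cᶜ := by
    rw [hφ.qual]
    exact fun h => hc.ne_bot (le_compl_self.1 (hle.trans h))
  obtain ⟨⟨x, z⟩, ⟨y, hxy, hyz⟩, hxz⟩ := Set.not_subset.1 hnot
  rw [hφ.map_compl] at hxz
  exact ⟨x, y, z, hxy, hyz, by simpa using hxz⟩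

variable [Fintype α]

lemma mem_atomOf (p : D × D) : p ∈ φ (atomOf φ p) := by
  classical
  refine Finset.inf_induction (p := (p ∈ φ ·)) ?_ (fun a ha b hb => ?_) fun a ha => ?_
  · rw [hφ.map_top]; trivial
  · rw [hφ.map_inf]; exact ⟨ha, hb⟩
  · exact (Finset.mem_filter.1 ha).2

lemma atomOf_le_iff {p : D × D} {a : α} : atomOf φ p ≤ a ↔ p ∈ φ a := by
  classical
  exact ⟨fun h => hφ.monotone h (hφ.mem_atomOf p), fun h => Finset.inf_le (by simpa using h)⟩

lemma isAtom_atomOf (p : D × D) : IsAtom (atomOf φ p) := by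
  refine ⟨fun h => by simpa [h, hφ.map_bot] using hφ.mem_atomOf p, fun b hb => ?_⟩
  have hp : p ∉ φ b := fun hp => hb.not_ge (hφ.atomOf_le_iff.2 hp)
  have hle : atomOf φ p ≤ bᶜ :=
    hφ.atomOf_le_iff.2 (by rw [hφ.map_compl]; exact ⟨trivial, hp⟩)
  exact le_compl_self.1 (hb.le.trans hle)

lemma atomOf_eq {p : D × D} {a : α} (ha : IsAtom a) (hp : p ∈ φ a) : atomOf φ p = a :=
  (ha.le_iff_eq (hφ.isAtom_atomOf p).ne_bot).1 (hφ.atomOf_le_iff.2 hp)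

lemma isConsistentAtomicNetwork_atomOf {N : Type*} (g : N → D) :
    IsConsistentAtomicNetwork fun x y => atomOf φ (g x, g y) where
  le_ident x := hφ.atomOf_le_iff.2 (by rw [hφ.map_ident]; rfl)
  comp_inf_ne_bot x y z := (hφ.isAtom_atomOf _).le_iff_inf_ne_bot.1 <| hφ.atomOf_le_iff.2 <|
    (hφ.qual _ _ _).2 le_rfl ⟨g y, hφ.mem_atomOf _, hφ.mem_atomOf _⟩
  inf_conv_ne_bot x y := by
    rw [inf_comm]
    refine (hφ.isAtom_atomOf _).le_iff_inf_ne_bot.1 (hφ.atomOf_le_iff.2 ?_)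
    rw [hφ.map_conv]
    exact hφ.mem_atomOf _
  isAtom x y := hφ.isAtom_atomOf _

lemma exists_finite_network :
    ∃ (N : Type u) (_ : Fintype N) (lam : N → N → α),
      IsConsistentAtomicNetwork lam ∧ RealizesConsistentTriples lam := by
  classical
  let T := {t : α × α × α // IsAtom t.2.2 ∧ t.2.2 ≤ comp t.1 t.2.1}
  choose x y z hw using fun t : T => hφ.exists_triangle t.2.1 t.2.2
  let g : T × Fin 3 → D := fun n => ![x n.1, y n.1, z n.1] n.2
  refine ⟨T × Fin 3, inferInstance, fun m n => atomOf φ (g m, g n),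
    hφ.isConsistentAtomicNetwork_atomOf g, fun a b c ha hb hc hle => ?_⟩
  obtain ⟨hxy, hyz, hxz⟩ := hw ⟨(a, b, c), hc, hle⟩
  exact ⟨(⟨_, hc, hle⟩, 0), (⟨_, hc, hle⟩, 1), (⟨_, hc, hle⟩, 2),
    hφ.atomOf_eq ha hxy, hφ.atomOf_eq hb hyz, hφ.atomOf_eq hc hxz⟩

end IsQualRep

theorem stmt11 {α : Type} [NAAlg α] [Fintype α] :
    (∃ (D : Type) (φ : α → Set (D × D)), Function.Injective φ ∧ IsQualRep φ) ↔
    (∃ (N : Type) (_ : Fintype N) (lam : N → N → α),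
      (∀ x : N, lam x x ≤ NAAlg.ident) ∧
      (∀ x y z : N, NAAlg.comp (lam x y) (lam y z) ⊓ lam x z ≠ ⊥) ∧
      (∀ x y : N, lam x y ⊓ NAAlg.conv (lam y x) ≠ ⊥) ∧
      (∀ x y : N, lam x y ≠ ⊥) ∧
      (∀ x y : N, IsAtom (lam x y)) ∧
      (∀ a b c : α, IsAtom a → IsAtom b → IsAtom c → c ≤ NAAlg.comp a b →
        ∃ x y z : N, lam x y = a ∧ lam y z = b ∧ lam x z = c)) := by
  constructor
  · rintro ⟨D, φ, -, hφ⟩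
    obtain ⟨N, hN, lam, h, hsat⟩ := hφ.exists_finite_network
    exact ⟨N, hN, lam, h.le_ident, h.comp_inf_ne_bot, h.inf_conv_ne_bot,
      fun x y => (h.isAtom x y).ne_bot, h.isAtom, hsat⟩
  · rintro ⟨N, _, lam, hid, hcomp, hconv, -, hatom, hsat⟩
    have h : NAAlg.IsConsistentAtomicNetwork lam := ⟨hid, hcomp, hconv, hatom⟩
    have hsat' := h.realizesConsistentTriples_quotient hsat
    exact ⟨Quotient h.setoid, NAAlg.networkRel h.quotient, NAAlg.injective_networkRel hsat',
      NAAlg.isQualRep_networkRel h.isConsistentAtomicNetwork_quotient h.eq_of_quotient_le_ident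
        hsat'⟩
end
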